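/- Assume André's generalized period conjecture in the form: for an André motive M over a finitely generated field K ⊆ C, dim_K(K-Zariski closure of the comparison point c_M in the period torsor Ω) ≥ dim G − trdeg_Q K, where G is the motivic Galois group. Given additionally a G-equivariant surjection Φ: Ω → F^And onto a flag variety G/P with Φ(c_M) = F^• the Hodge filtration point, deduce: trdeg H ≥ dim F^And − trdeg_Q K. -/

import Mathlib

theorem ringKrullDim_quotient_le_of_le {R : Type*} [CommRing R] {I J : Ideal R} (h : I ≤ J) :
    ringKrullDim (R ⧸ J) ≤ ringKrullDim (R ⧸ I) :=
  ringKrullDim_le_of_surjective _ (Ideal.Quotient.factor_surjective h)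

theorem Ideal.map_ker_comp_le {R S T : Type*} [Semiring R] [Semiring S] [Semiring T]
    (f : R →+* S) (g : S →+* T) : Ideal.map f (RingHom.ker (g.comp f)) ≤ RingHom.ker g := by
  rw [← RingHom.comap_ker]
  exact Ideal.map_comap_le

/-- Since `Φ` maps the ideal of `F^•` into the ideal of `c_M`, the closure of `c_M` lies in the
preimage of the closure of `F^•`; the fibre bound then costs `dim P_μ`, which cancels against
`dim G = dim F^And + dim P_μ`. -/
theorem stmt_12_general (K0 : Subfield ℂ) (A B0 : Type) [CommRing A] [CommRing B0]
    [Algebra ↥K0 A] [Algebra ↥K0 B0]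
    (Φ : B0 →ₐ[↥K0] A) (c : A →ₐ[↥K0] ℂ)
    (dG dP dF t : ℕ) (hdF : dF + dP = dG)
    (hAndre : (dG : WithBot ℕ∞)
        ≤ ringKrullDim (A ⧸ RingHom.ker c.toRingHom) + (t : WithBot ℕ∞))
    (hfib : ∀ q : Ideal B0, q.IsPrime →
      ringKrullDim (A ⧸ Ideal.map Φ q)
        ≤ ringKrullDim (B0 ⧸ q) + (dP : WithBot ℕ∞)) :
    (dF : WithBot ℕ∞)
      ≤ ringKrullDim (B0 ⧸ RingHom.ker (c.comp Φ).toRingHom) + (t : WithBot ℕ∞) := by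
  set q := RingHom.ker (c.comp Φ).toRingHom
  have hclosure : ringKrullDim (A ⧸ RingHom.ker c.toRingHom)
      ≤ ringKrullDim (A ⧸ Ideal.map Φ q) :=
    ringKrullDim_quotient_le_of_le (Ideal.map_ker_comp_le Φ.toRingHom c.toRingHom)
  have hfibre := hfib q (RingHom.ker_isPrime _)
  refine (ENat.WithBot.add_le_add_natCast_right_iff (c := dP)).mp ?_
  calc (dF : WithBot ℕ∞) + dP = dG := by rw [← hdF]; push_cast; rfl
    _ ≤ ringKrullDim (A ⧸ RingHom.ker c.toRingHom) + t := hAndre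
    _ ≤ ringKrullDim (A ⧸ Ideal.map Φ q) + t := by gcongr
    _ ≤ ringKrullDim (B0 ⧸ q) + dP + t := by gcongr
    _ = ringKrullDim (B0 ⧸ q) + t + dP := add_right_comm _ _ _

theorem stmt_12 (K0 : Subfield ℂ) (A B0 : Type) [CommRing A] [CommRing B0]
    [Algebra ↥K0 A] [Algebra ↥K0 B0]
    [Algebra.FiniteType ↥K0 A] [Algebra.FiniteType ↥K0 B0]
    (Φ : B0 →ₐ[↥K0] A) (c : A →ₐ[↥K0] ℂ)
    (dG dP dF t : ℕ) (hdF : dF + dP = dG)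
    (hAndre : (dG : WithBot ℕ∞)
        ≤ ringKrullDim (A ⧸ RingHom.ker c.toRingHom) + (t : WithBot ℕ∞))
    (hfib : ∀ q : Ideal B0, q.IsPrime →
      ringKrullDim (A ⧸ Ideal.map Φ q)
        ≤ ringKrullDim (B0 ⧸ q) + (dP : WithBot ℕ∞)) :
    (dF : WithBot ℕ∞)
      ≤ ringKrullDim (B0 ⧸ RingHom.ker (c.comp Φ).toRingHom) + (t : WithBot ℕ∞) :=
  stmt_12_general K0 A B0 Φ c dG dP dF t hdF hAndre hfib
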